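/- Let G=(V,E) be a finite tree with at least three vertices, with boundary δG containing x; let x₁ be the neighbor of x, let x₂,…,x_m (m=deg x₁) be the other neighbors of x₁, and set σ₁:=min_{2≤j≤m} σ(G_j,x₁), where G_j=H_j(x_j,x₁) and H_j is the branch from (x_j,x₁). If f is a λ-flow to x on G with 0≤λ<σ₁ such that f(z)>0 for all z∈δG∖{x} and f(x)<0, then λ > σ(G,x). -/

import Mathlib

open Finset

attribute [local instance] Classical.propDecidable

namespace Steklov

variable {V : Type} [Fintype V] [DecidableEq V]

/-- The boundary of a graph: the set of vertices of degree one. -/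
noncomputable def bdry (G : SimpleGraph V) : Finset V :=
  Finset.univ.filter (fun v => G.degree v = 1)

/-- The graph Laplacian `Δf(x) = Σ_{y∼x} (f x - f y)`. -/
noncomputable def lap (G : SimpleGraph V) (f : V → ℝ) (x : V) : ℝ :=
  ∑ y ∈ G.neighborFinset x, (f x - f y)

/-- `f` is a Steklov eigenfunction of `G` with eigenvalue `lam`:
`f ≠ 0`, `Δf = 0` on the interior and `∂f/∂n = lam • f` on the boundary. -/
noncomputable def IsEigenpair (G : SimpleGraph V) (lam : ℝ) (f : V → ℝ) : Prop :=
  f ≠ 0 ∧ (∀ x, x ∉ bdry G → lap G f x = 0) ∧ ∀ x ∈ bdry G, lap G f x = lam * f x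

/-- The first nonzero Steklov eigenvalue of `G`. -/
noncomputable def lambda2 (G : SimpleGraph V) : ℝ :=
  sInf {lam : ℝ | 0 < lam ∧ ∃ f : V → ℝ, IsEigenpair G lam f}

/-- `f` is a `lam`-flow to `x` on `G`. -/
noncomputable def IsFlow (G : SimpleGraph V) (lam : ℝ) (x : V) (f : V → ℝ) : Prop :=
  f ≠ 0 ∧ (∀ w, w ∉ bdry G → w ≠ x → lap G f w = 0) ∧
    ∀ w ∈ bdry G, w ≠ x → lap G f w = lam * f w

/-- The Rayleigh quotient of `f` (sum over undirected edges in the numerator). -/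
noncomputable def rayleigh (G : SimpleGraph V) (f : V → ℝ) : ℝ :=
  ((∑ x, ∑ y ∈ G.neighborFinset x, (f x - f y) ^ 2) / 2) / ∑ x ∈ bdry G, f x ^ 2

/-- `Σ(G,x)`: the set of `lam ≥ 0` admitting a `lam`-flow `f` to `x` with `f x = 0`
which increases along edges pointing away from `x`. -/
def SigmaSet (G : SimpleGraph V) (x : V) : Set ℝ :=
  {lam | 0 ≤ lam ∧ ∃ f : V → ℝ, IsFlow G lam x f ∧ f x = 0 ∧
    ∀ y z : V, G.Adj y z → G.dist x z < G.dist x y → f z < f y}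

/-- `Σ̂(G,x)`: the set of `lam ≥ 0` admitting a `lam`-flow `f` to `x` with `f x = 0`. -/
def SigmaHatSet (G : SimpleGraph V) (x : V) : Set ℝ :=
  {lam | 0 ≤ lam ∧ ∃ f : V → ℝ, IsFlow G lam x f ∧ f x = 0}

/-- `σ(G,x) = inf Σ(G,x)`. -/
noncomputable def sigma (G : SimpleGraph V) (x : V) : ℝ := sInf (SigmaSet G x)

/-- `σ̂(G,x) = inf Σ̂(G,x)`. -/
noncomputable def sigmaHat (G : SimpleGraph V) (x : V) : ℝ := sInf (SigmaHatSet G x)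

/-- The vertex set of the branch from `(u,v)`: the connected component of `u`
after deleting the edge between `u` and `v`. -/
def branchSet (G : SimpleGraph V) (u v : V) : Set V :=
  {w | (G.deleteEdges {s(u, v)}).Reachable u w}

/-- The vertex set of the subtree `H(u,v)` spanned by the branch from `(u,v)` together
with `v`. -/
def branchClosed (G : SimpleGraph V) (u v : V) : Set V :=
  insert v (branchSet G u v)

/-- `σ(H(u,v), v)`, computed intrinsically in the subtree `H(u,v)`. -/
noncomputable def sigmaB (G : SimpleGraph V) (u v : V) : ℝ :=
  sigma (G.induce (branchClosed G u v)) ⟨v, Set.mem_insert _ _⟩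

/-- The double `(G)²_x` of `G` at `x`: two disjoint copies of `G` with the two
copies of `x` identified. -/
def doubleAt (G : SimpleGraph V) (x : V) : SimpleGraph (V ⊕ {v : V // v ≠ x}) where
  Adj a b :=
    match a, b with
    | Sum.inl u, Sum.inl w => G.Adj u w
    | Sum.inr u, Sum.inr w => G.Adj u.1 w.1
    | Sum.inl u, Sum.inr w => u = x ∧ G.Adj x w.1
    | Sum.inr u, Sum.inl w => w = x ∧ G.Adj x u.1
  symm := by
    constructor
    rintro (u | u) (w | w) h
    · exact h.symm
    · exact h
    · exact h
    · exact h.symm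
  loopless := by
    constructor
    rintro (u | u) h
    · exact G.loopless.irrefl u h
    · exact G.loopless.irrefl u.1 h

/-!
Let `μ` be the minimum, over functions vanishing at `x`, of the Rayleigh quotient of the Dirichlet
energy `D(h)` by `‖h‖²` on `δG ∖ {x}`; compactness gives a nonnegative minimizer `m`. Its
Euler–Lagrange equations say that `m` is a `μ`-flow to `x`, the minimum principle makes it positive
off `x`, and summing `Δm` over the branch behind an edge `(y,z)` pointing towards `x` gives
`m y - m z = μ Σ m > 0` over the leaves of that branch. Hence `μ ∈ Σ(G,x)` and `σ(G,x) ≤ μ`.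

Testing the quotient with `f⁺` gives `D(f⁺) ≤ ⟨f⁺, Δf⟩ = λ ‖f⁺‖²`, so `μ ≤ λ`. If `μ = λ`, then
`f⁺` is itself a minimizer, hence solves the `λ`-flow equations, and so does `f⁺ - f ≥ 0`, which
vanishes on `δG ∖ {x}`. The minimum principle forces `f⁺ = f`, contradicting `f x < 0`.
-/

set_option linter.unusedSectionVars false

open SimpleGraph

lemma mem_bdry {G : SimpleGraph V} {v : V} : v ∈ bdry G ↔ G.degree v = 1 := by
  simp [bdry]

section Forms

variable (G : SimpleGraph V)

noncomputable def dirichletForm (g h : V → ℝ) : ℝ :=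
  (∑ v, ∑ y ∈ G.neighborFinset v, (g v - g y) * (h v - h y)) / 2

noncomputable def bdryForm (x : V) (g h : V → ℝ) : ℝ :=
  ∑ w ∈ (bdry G).erase x, g w * h w

lemma sum_neighborFinset_comm (F : V → V → ℝ) :
    ∑ v, ∑ y ∈ G.neighborFinset v, F v y = ∑ v, ∑ y ∈ G.neighborFinset v, F y v :=
  Finset.sum_comm' fun a b => by simp [G.adj_comm]

theorem dirichletForm_eq_sum_mul_lap (g h : V → ℝ) :
    dirichletForm G g h = ∑ v, g v * lap G h v := by
  have hsplit : ∀ v y, (g v - g y) * (h v - h y) = g v * (h v - h y) + g y * (h y - h v) :=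
    fun _ _ => by ring
  have hswap := sum_neighborFinset_comm G fun v y => g y * (h y - h v)
  simp only [dirichletForm, hsplit, Finset.sum_add_distrib, hswap, lap, Finset.mul_sum]
  ring

lemma dirichletForm_comm (g h : V → ℝ) : dirichletForm G g h = dirichletForm G h g := by
  simp only [dirichletForm, mul_comm]

lemma dirichletForm_self_nonneg (h : V → ℝ) : 0 ≤ dirichletForm G h h :=
  div_nonneg (Finset.sum_nonneg fun _ _ => Finset.sum_nonneg fun _ _ => mul_self_nonneg _)
    zero_le_two

lemma bdryForm_self_nonneg (x : V) (h : V → ℝ) : 0 ≤ bdryForm G x h h :=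
  Finset.sum_nonneg fun w _ => mul_self_nonneg (h w)

lemma dirichletForm_add_smul_self (g h : V → ℝ) (t : ℝ) :
    dirichletForm G (g + t • h) (g + t • h) =
      dirichletForm G g g + 2 * t * dirichletForm G g h + t ^ 2 * dirichletForm G h h := by
  simp only [dirichletForm, Pi.add_apply, Pi.smul_apply, smul_eq_mul, Finset.mul_sum,
    mul_div_assoc', ← add_div, ← Finset.sum_add_distrib]
  congr 1
  exact Finset.sum_congr rfl fun v _ => Finset.sum_congr rfl fun y _ => by ring

lemma bdryForm_add_smul_self (x : V) (g h : V → ℝ) (t : ℝ) :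
    bdryForm G x (g + t • h) (g + t • h) =
      bdryForm G x g g + 2 * t * bdryForm G x g h + t ^ 2 * bdryForm G x h h := by
  simp only [bdryForm, Pi.add_apply, Pi.smul_apply, smul_eq_mul, Finset.mul_sum,
    ← Finset.sum_add_distrib]
  exact Finset.sum_congr rfl fun v _ => by ring

lemma dirichletForm_smul_self (c : ℝ) (h : V → ℝ) :
    dirichletForm G (c • h) (c • h) = c ^ 2 * dirichletForm G h h := by
  simp only [dirichletForm, Pi.smul_apply, smul_eq_mul, Finset.mul_sum, mul_div_assoc']
  congr 1
  exact Finset.sum_congr rfl fun v _ => Finset.sum_congr rfl fun y _ => by ring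

lemma bdryForm_smul_self (x : V) (c : ℝ) (h : V → ℝ) :
    bdryForm G x (c • h) (c • h) = c ^ 2 * bdryForm G x h h := by
  simp only [bdryForm, Pi.smul_apply, smul_eq_mul, Finset.mul_sum]
  exact Finset.sum_congr rfl fun v _ => by ring

lemma dirichletForm_abs_le (h : V → ℝ) : dirichletForm G |h| |h| ≤ dirichletForm G h h := by
  refine div_le_div_of_nonneg_right
    (Finset.sum_le_sum fun v _ => Finset.sum_le_sum fun y _ => ?_) zero_le_two
  simpa only [Pi.abs_apply, ← sq] using sq_le_sq.mpr (abs_abs_sub_abs_le_abs_sub (h v) (h y))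

lemma bdryForm_abs (x : V) (h : V → ℝ) : bdryForm G x |h| |h| = bdryForm G x h h := by
  simp only [bdryForm, Pi.abs_apply, abs_mul_abs_self]

lemma posPart_sub_mul_self_le (a b : ℝ) : (a⁺ - b⁺) * (a⁺ - b⁺) ≤ (a⁺ - b⁺) * (a - b) := by
  rcases le_total a 0 with ha | ha <;> rcases le_total b 0 with hb | hb <;>
    simp only [posPart_eq_zero.mpr, posPart_eq_self.mpr, ha, hb] <;> nlinarith

lemma posPart_mul_self_eq (a : ℝ) : a⁺ * a = a⁺ * a⁺ := by
  rcases le_total a 0 with ha | ha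
  · simp [posPart_eq_zero.mpr ha]
  · rw [posPart_eq_self.mpr ha]

lemma dirichletForm_posPart_le (f : V → ℝ) : dirichletForm G f⁺ f⁺ ≤ dirichletForm G f⁺ f :=
  div_le_div_of_nonneg_right (Finset.sum_le_sum fun v _ => Finset.sum_le_sum fun y _ => by
    simpa using posPart_sub_mul_self_le (f v) (f y)) zero_le_two

lemma sq_sub_le_dirichletForm (h : V → ℝ) {a b : V} (hab : G.Adj a b) :
    (h a - h b) ^ 2 ≤ dirichletForm G h h := by
  set E : V → ℝ := fun u => ∑ y ∈ G.neighborFinset u, (h u - h y) * (h u - h y)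
  have hE : ∀ {u w : V}, G.Adj u w → (h u - h w) ^ 2 ≤ E u := fun huw =>
    sq (h _ - h _) ▸ Finset.single_le_sum (fun y _ => mul_self_nonneg (h _ - h y))
      ((G.mem_neighborFinset _ _).mpr huw)
  have hsum : E a + E b ≤ ∑ u, E u := Finset.add_le_sum
    (fun u _ => Finset.sum_nonneg fun y _ => mul_self_nonneg _) (Finset.mem_univ a)
    (Finset.mem_univ b) hab.ne
  have := hE hab
  have := hE hab.symm
  unfold dirichletForm
  nlinarith

end Forms

def SolvesFlow (G : SimpleGraph V) (lam : ℝ) (x : V) (f : V → ℝ) : Prop :=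
  ∀ w, w ≠ x → lap G f w = if w ∈ bdry G then lam * f w else 0

def RayleighBound (G : SimpleGraph V) (x : V) (μ : ℝ) : Prop :=
  ∀ h : V → ℝ, h x = 0 → μ * bdryForm G x h h ≤ dirichletForm G h h

section Flow

variable {G : SimpleGraph V} {lam : ℝ} {x : V} {f g : V → ℝ}

lemma isFlow_iff : IsFlow G lam x f ↔ f ≠ 0 ∧ SolvesFlow G lam x f := by
  refine and_congr_right fun _ => ⟨fun ⟨hint, hbd⟩ w hwx => ?_, fun h => ⟨?_, ?_⟩⟩
  · split_ifs with hw
    exacts [hbd w hw hwx, hint w hw hwx]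
  · intro w hw hwx
    simpa [hw] using h w hwx
  · intro w hw hwx
    simpa [hw] using h w hwx

lemma lap_sub (f g : V → ℝ) (w : V) : lap G (f - g) w = lap G f w - lap G g w := by
  simp only [lap, Pi.sub_apply, ← Finset.sum_sub_distrib]
  exact Finset.sum_congr rfl fun _ _ => by ring

lemma SolvesFlow.sub (hf : SolvesFlow G lam x f) (hg : SolvesFlow G lam x g) :
    SolvesFlow G lam x (f - g) := fun w hw => by
  rw [lap_sub, hf w hw, hg w hw]
  split_ifs <;> simp [mul_sub]

lemma SolvesFlow.lap_eq_zero (hf : SolvesFlow G lam x f) {w : V} (hwx : w ≠ x) (hw : f w = 0) :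
    lap G f w = 0 := by
  simp [hf w hwx, hw]

theorem SolvesFlow.dirichletForm_posPart_le_mul_bdryForm (hf : SolvesFlow G lam x f)
    (hfx : f x ≤ 0) : dirichletForm G f⁺ f⁺ ≤ lam * bdryForm G x f⁺ f⁺ := by
  refine (dirichletForm_posPart_le G f).trans_eq ?_
  have hout : ∀ v ∈ Finset.univ, v ∉ (bdry G).erase x → f⁺ v * lap G f v = 0 := fun v _ hv => by
    obtain rfl | hvx := eq_or_ne v x
    · simp [posPart_eq_zero.mpr hfx]
    · rw [hf v hvx, if_neg fun hb => hv (Finset.mem_erase.mpr ⟨hvx, hb⟩), mul_zero]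
  rw [dirichletForm_eq_sum_mul_lap, ← Finset.sum_subset (Finset.subset_univ _) hout, bdryForm,
    Finset.mul_sum]
  refine Finset.sum_congr rfl fun v hv => ?_
  obtain ⟨hvx, hvb⟩ := Finset.mem_erase.mp hv
  rw [hf v hvx, if_pos hvb, mul_left_comm, Pi.posPart_apply, posPart_mul_self_eq]

end Flow

lemma eq_zero_of_forall_nonneg_mul_add_sq {c d : ℝ} (h : ∀ t : ℝ, 0 ≤ t * c + t ^ 2 * d) :
    c = 0 := by
  have := h (-c / (|d| + 1))
  field_simp at this
  nlinarith [le_abs_self d, sq_nonneg c]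

section Rayleigh

variable {G : SimpleGraph V} {x : V} {μ : ℝ} {g : V → ℝ}

theorem RayleighBound.solvesFlow (hμ : RayleighBound G x μ) (hgx : g x = 0)
    (hg : dirichletForm G g g = μ * bdryForm G x g g) : SolvesFlow G μ x g := by
  intro v hvx
  set e : V → ℝ := Pi.single v 1
  have hex : e x = 0 := Pi.single_eq_of_ne hvx.symm 1
  have hvar : ∀ t : ℝ, 0 ≤ t * (2 * (dirichletForm G g e - μ * bdryForm G x g e)) +
      t ^ 2 * (dirichletForm G e e - μ * bdryForm G x e e) := by
    intro t
    have := hμ (g + t • e) (by simp [hgx, hex])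
    rw [dirichletForm_add_smul_self, bdryForm_add_smul_self] at this
    linarith
  have hD : dirichletForm G g e = lap G g v := by
    rw [dirichletForm_comm, dirichletForm_eq_sum_mul_lap]
    simp [e, Pi.single_apply]
  have hB : bdryForm G x g e = if v ∈ bdry G then g v else 0 := by
    simp [bdryForm, e, Pi.single_apply, hvx]
  have key := eq_zero_of_forall_nonneg_mul_add_sq hvar
  rw [hD, hB] at key
  split_ifs at key ⊢ <;> linarith

lemma rayleighBound_of_forall_bdryForm_eq_one
    (hμ : ∀ h : V → ℝ, h x = 0 → bdryForm G x h h = 1 → μ ≤ dirichletForm G h h) :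
    RayleighBound G x μ := by
  intro h hx
  rcases (bdryForm_self_nonneg G x h).eq_or_lt with hb | hb
  · rw [← hb, mul_zero]
    exact dirichletForm_self_nonneg G h
  · set c := (√(bdryForm G x h h))⁻¹
    have hc : c ^ 2 * bdryForm G x h h = 1 := by
      rw [inv_pow, Real.sq_sqrt hb.le, inv_mul_cancel₀ hb.ne']
    have := hμ (c • h) (by simp [hx]) (by rw [bdryForm_smul_self, hc])
    rw [dirichletForm_smul_self] at this
    calc μ * bdryForm G x h h ≤ c ^ 2 * dirichletForm G h h * bdryForm G x h h := by gcongr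
      _ = dirichletForm G h h := by rw [mul_right_comm, hc, one_mul]

lemma abs_sub_le_length_mul {h : V → ℝ} {s : ℝ} (hs : ∀ a b, G.Adj a b → |h a - h b| ≤ s)
    {a b : V} (p : G.Walk a b) : |h a - h b| ≤ p.length * s := by
  induction p with
  | nil => simp
  | @cons u v w hadj q ih =>
    rw [Walk.length_cons]
    push_cast
    linarith [abs_sub_le (h u) (h v) (h w), hs _ _ hadj]

lemma norm_le_of_dirichletForm_le (hconn : G.Connected) {h : V → ℝ} {C : ℝ} (hx : h x = 0)
    (hC : dirichletForm G h h ≤ C) : ‖h‖ ≤ Fintype.card V * √C := by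
  have hedge : ∀ a b, G.Adj a b → |h a - h b| ≤ √C := fun a b hab =>
    Real.abs_le_sqrt ((sq_sub_le_dirichletForm G h hab).trans hC)
  refine (pi_norm_le_iff_of_nonneg (by positivity)).mpr fun v => ?_
  obtain ⟨p, hp⟩ := hconn.preconnected.exists_isPath x v
  calc ‖h v‖ = |h x - h v| := by rw [hx, zero_sub, abs_neg, Real.norm_eq_abs]
    _ ≤ p.length * √C := abs_sub_le_length_mul hedge p
    _ ≤ Fintype.card V * √C := by gcongr; exact hp.length_lt.le

theorem exists_isMinOn_dirichletForm (hconn : G.Connected) {w₀ : V} (hw₀ : w₀ ∈ bdry G)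
    (hw₀x : w₀ ≠ x) : ∃ m : V → ℝ, m x = 0 ∧ bdryForm G x m m = 1 ∧
      ∀ h : V → ℝ, h x = 0 → bdryForm G x h h = 1 → dirichletForm G m m ≤ dirichletForm G h h := by
  set e : V → ℝ := Pi.single w₀ 1
  have he : e x = 0 ∧ bdryForm G x e e = 1 :=
    ⟨Pi.single_eq_of_ne hw₀x.symm 1, by simp [bdryForm, e, Pi.single_apply, hw₀, hw₀x]⟩
  set C := dirichletForm G e e
  set K : Set (V → ℝ) := {h | h x = 0 ∧ bdryForm G x h h = 1 ∧ dirichletForm G h h ≤ C}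
  have hD : Continuous fun h : V → ℝ => dirichletForm G h h := by unfold dirichletForm; fun_prop
  have hB : Continuous fun h : V → ℝ => bdryForm G x h h := by unfold bdryForm; fun_prop
  have hK : IsCompact K := by
    refine Metric.isCompact_of_isClosed_isBounded ?_ ?_
    · exact (isClosed_eq (continuous_apply x) continuous_const).inter
        ((isClosed_eq hB continuous_const).inter (isClosed_le hD continuous_const))
    · exact isBounded_iff_forall_norm_le.mpr
        ⟨_, fun h hh => norm_le_of_dirichletForm_le hconn hh.1 hh.2.2⟩
  obtain ⟨m, hmK, hmin⟩ := hK.exists_isMinOn ⟨e, he.1, he.2, le_rfl⟩ hD.continuousOn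
  refine ⟨m, hmK.1, hmK.2.1, fun h hx hb => ?_⟩
  by_cases hC : dirichletForm G h h ≤ C
  · exact hmin ⟨hx, hb, hC⟩
  · exact hmK.2.2.trans (le_of_not_ge hC)

theorem exists_nonneg_rayleighBound (hconn : G.Connected) {w₀ : V} (hw₀ : w₀ ∈ bdry G)
    (hw₀x : w₀ ≠ x) : ∃ m : V → ℝ, 0 ≤ m ∧ m x = 0 ∧ bdryForm G x m m = 1 ∧
      RayleighBound G x (dirichletForm G m m) := by
  obtain ⟨m, hmx, hm1, hmin⟩ := exists_isMinOn_dirichletForm hconn hw₀ hw₀x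
  refine ⟨|m|, fun v => abs_nonneg (m v), by simp [hmx], by rw [bdryForm_abs, hm1], ?_⟩
  exact rayleighBound_of_forall_bdryForm_eq_one fun h hx hb =>
    (dirichletForm_abs_le G m).trans (hmin h hx hb)

end Rayleigh

lemma _root_.SimpleGraph.Reachable.of_adj_imp {W : Type*} {H : SimpleGraph W} {P : W → Prop}
    (hP : ∀ u v, H.Adj u v → P u → P v) {a b : W} (hab : H.Reachable a b) (ha : P a) : P b := by
  obtain ⟨p⟩ := hab
  induction p with
  | nil => exact ha
  | cons hadj _ ih => exact ih (hP _ _ hadj ha)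

section MinimumPrinciple

variable {G : SimpleGraph V} {x : V} {μ : ℝ} {u : V → ℝ}

lemma eq_zero_of_adj_of_lap_eq_zero (hnn : 0 ≤ u) {v y : V} (hv : u v = 0)
    (hlap : lap G u v = 0) (hadj : G.Adj v y) : u y = 0 := by
  simp only [lap, hv, zero_sub, Finset.sum_neg_distrib, neg_eq_zero] at hlap
  exact (Finset.sum_eq_zero_iff_of_nonneg fun w _ => hnn w).mp hlap y
    ((G.mem_neighborFinset v y).mpr hadj)

theorem SolvesFlow.eq_zero_of_nonneg (hconn : G.Connected) (hx : x ∈ bdry G)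
    (hu : SolvesFlow G μ x u) (hnn : 0 ≤ u) {w₀ : V} (hw₀x : w₀ ≠ x) (hw₀ : u w₀ = 0) :
    u = 0 := by
  have hdeg : G.degree x = 1 := mem_bdry.mp hx
  have hstep : ∀ v y, v ≠ x → G.Adj v y → u v = 0 → u y = 0 := fun v y hvx hadj hv =>
    eq_zero_of_adj_of_lap_eq_zero hnn hv (hu.lap_eq_zero hvx hv) hadj
  have hoff : ∀ v, v ≠ x → u v = 0 := fun v hvx =>
    ((hconn.induce_compl_singleton_of_degree_eq_one hdeg).preconnected ⟨w₀, hw₀x⟩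
      ⟨v, hvx⟩).of_adj_imp (P := fun a : ({x}ᶜ : Set V) => u a = 0)
      (fun a b hab => hstep a b a.2 (by simpa using hab)) hw₀
  obtain ⟨x₁, hx₁, -⟩ := degree_eq_one_iff_existsUnique_adj.mp hdeg
  funext v
  obtain rfl | hvx := eq_or_ne v x
  · exact hstep x₁ v hx₁.ne' hx₁.symm (hoff x₁ hx₁.ne')
  · exact hoff v hvx

end MinimumPrinciple

section Trees

variable {G : SimpleGraph V}

lemma _root_.SimpleGraph.Walk.dist_lt_of_mem_support {a u v : V} (q : G.Walk a u)
    (hq : q.length = G.dist a u) (hv : v ∈ q.support) (hvu : v ≠ u) :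
    G.dist a v < G.dist a u :=
  (dist_le _).trans_lt (hq ▸ q.length_takeUntil_lt_length hv hvu)

lemma _root_.SimpleGraph.IsAcyclic.eq_penultimate_of_dist_le (hG : G.IsAcyclic) {a v u : V}
    {p : G.Walk a v} (hp : p.length = G.dist a v) (hadj : G.Adj v u)
    (hu : G.dist a u ≤ G.dist a v) : u = p.penultimate := by
  obtain ⟨q, hq⟩ := (p.reachable.trans hadj.reachable).exists_walk_length_eq_dist
  have hvq : v ∉ q.support := fun hv => (q.dist_lt_of_mem_support hq hv hadj.ne).not_ge hu
  have hpath := p.isPath_of_length_eq_dist hp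
  exact hG.eq_penultimate_of_adj_end hpath hadj
    (hG.mem_support_of_ne_mem_support_of_adj_of_isPath hpath (q.isPath_of_length_eq_dist hq)
      hadj hvq)

lemma exists_mem_bdry_of_forall_adj (hG : G.IsTree) {a : V} {S : Finset V}
    (hS : S.Nonempty) (ha : a ∉ S)
    (hout : ∀ v ∈ S, ∀ u, G.Adj v u → G.dist a v < G.dist a u → u ∈ S) :
    ∃ v ∈ S, v ∈ bdry G := by
  obtain ⟨v, hvS, hvmax⟩ := S.exists_max_image (G.dist a) hS
  obtain ⟨p, hp⟩ := (hG.connected a v).exists_walk_length_eq_dist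
  have hnil : ¬p.Nil := fun h => ha (h.eq ▸ hvS)
  have hnbr : G.neighborFinset v = {p.penultimate} := by
    refine Finset.eq_singleton_iff_unique_mem.mpr
      ⟨by simpa using (p.adj_penultimate hnil).symm, fun u hu => ?_⟩
    rw [mem_neighborFinset] at hu
    refine hG.isAcyclic.eq_penultimate_of_dist_le hp hu (not_lt.mp fun hlt => ?_)
    exact (hvmax u (hout v hvS u hu hlt)).not_gt hlt
  exact ⟨v, hvS, mem_bdry.mpr (by rw [← card_neighborFinset_eq_degree, hnbr, card_singleton])⟩

lemma exists_mem_bdry_ne (hG : G.IsTree) {x : V} (hx : x ∈ bdry G) : ∃ w ∈ bdry G, w ≠ x := by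
  obtain ⟨x₁, hx₁, -⟩ := degree_eq_one_iff_existsUnique_adj.mp (mem_bdry.mp hx)
  have : Nontrivial V := ⟨⟨x, x₁, hx₁.ne⟩⟩
  obtain ⟨u, v, huv, hu, hv⟩ := hG.exists_ne_and_degree_eq_one
  obtain rfl | hux := eq_or_ne u x
  · exact ⟨v, mem_bdry.mpr hv, huv.symm⟩
  · exact ⟨u, mem_bdry.mpr hu, hux⟩

end Trees

lemma sum_lap_eq_sum_sdiff (G : SimpleGraph V) (S : Finset V) (f : V → ℝ) :
    ∑ v ∈ S, lap G f v = ∑ v ∈ S, ∑ u ∈ G.neighborFinset v \ S, (f v - f u) := by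
  set T := ∑ v ∈ S, ∑ u ∈ G.neighborFinset v ∩ S, (f v - f u)
  have hswap : T = ∑ u ∈ S, ∑ v ∈ G.neighborFinset u ∩ S, (f v - f u) :=
    Finset.sum_comm' fun v u => by
      simp only [Finset.mem_inter, mem_neighborFinset, G.adj_comm v u]
      tauto
  have hneg : ∑ u ∈ S, ∑ v ∈ G.neighborFinset u ∩ S, (f v - f u) = -T := by
    simp only [T, ← Finset.sum_neg_distrib, neg_sub]
  have hlap : ∀ v, ∑ u ∈ G.neighborFinset v \ S, (f v - f u) =
      lap G f v - ∑ u ∈ G.neighborFinset v ∩ S, (f v - f u) := fun v => by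
    rw [lap, ← Finset.sum_sdiff_eq_sub Finset.inter_subset_left, Finset.sdiff_inter_self_left]
  rw [Finset.sum_congr rfl fun v _ => hlap v, Finset.sum_sub_distrib]
  linarith

section Branch

variable {G : SimpleGraph V} {y z : V}

lemma mem_branchSet_self : y ∈ branchSet G y z := Reachable.refl y

lemma notMem_branchSet (hG : G.IsAcyclic) (hadj : G.Adj y z) : z ∉ branchSet G y z :=
  isBridge_iff.mp (isAcyclic_iff_forall_adj_isBridge.mp hG hadj)

lemma eq_of_mem_branchSet_of_notMem (hG : G.IsAcyclic) (hadj : G.Adj y z) {v u : V}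
    (hv : v ∈ branchSet G y z) (hvu : G.Adj v u) (hu : u ∉ branchSet G y z) :
    v = y ∧ u = z := by
  have he : s(v, u) = s(y, z) := by
    by_contra hne
    exact hu (hv.trans (Adj.reachable
      ((deleteEdges_adj ..).mpr ⟨hvu, by rwa [Set.mem_singleton_iff]⟩)))
  rcases Sym2.eq_iff.mp he with h | ⟨rfl, rfl⟩
  · exact h
  · exact absurd hv (notMem_branchSet hG hadj)

lemma notMem_branchSet_of_dist_lt (hG : G.IsTree) {x : V} (hadj : G.Adj y z)
    (hlt : G.dist x z < G.dist x y) : x ∉ branchSet G y z := by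
  intro hx
  obtain ⟨q, hq⟩ := (hG.connected x z).exists_walk_length_eq_dist
  have hyq : y ∉ q.support := fun hy => (q.dist_lt_of_mem_support hq hy hadj.ne).not_gt hlt
  have q' := q.toDeleteEdge s(y, z) fun he => hyq (q.fst_mem_support_of_mem_edges he)
  exact notMem_branchSet hG.isAcyclic hadj (hx.trans q'.reachable)

lemma sum_lap_branchSet (hG : G.IsAcyclic) (hadj : G.Adj y z) (f : V → ℝ) :
    ∑ v ∈ (branchSet G y z).toFinset, lap G f v = f y - f z := by
  set S := (branchSet G y z).toFinset
  have hyS : y ∈ S := by simpa [S] using mem_branchSet_self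
  have hcut : ∀ v ∈ S, ∀ u ∈ G.neighborFinset v \ S, v = y ∧ u = z := fun v hv u hu => by
    simp only [S, Finset.mem_sdiff, Set.mem_toFinset, mem_neighborFinset] at hv hu
    exact eq_of_mem_branchSet_of_notMem hG hadj hv hu.1 hu.2
  have hz : z ∈ G.neighborFinset y \ S := by
    simpa [S] using ⟨hadj, notMem_branchSet hG hadj⟩
  rw [sum_lap_eq_sum_sdiff, Finset.sum_eq_single_of_mem y hyS
    fun v hv hvy => Finset.sum_eq_zero fun u hu => absurd (hcut v hv u hu).1 hvy,
    Finset.sum_eq_single_of_mem z hz fun u hu huz => absurd (hcut y hyS u hu).2 huz]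

end Branch

section Sigma

variable {G : SimpleGraph V} {x : V} {μ : ℝ} {f : V → ℝ}

theorem SolvesFlow.lt_of_dist_lt (hG : G.IsTree) (hf : SolvesFlow G μ x f) (hμ : 0 < μ)
    (hpos : ∀ v, v ≠ x → 0 < f v) {y z : V} (hadj : G.Adj y z)
    (hlt : G.dist x z < G.dist x y) : f z < f y := by
  set S := (branchSet G y z).toFinset
  have hxS : x ∉ S := by simpa [S] using notMem_branchSet_of_dist_lt hG hadj hlt
  have hyS : y ∈ S := by simpa [S] using mem_branchSet_self
  obtain ⟨w, hwS, hw⟩ := exists_mem_bdry_of_forall_adj hG ⟨y, hyS⟩ hxS fun v hv u hvu hd => by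
    by_contra hu
    simp only [S, Set.mem_toFinset] at hv hu
    obtain ⟨rfl, rfl⟩ := eq_of_mem_branchSet_of_notMem hG.isAcyclic hadj hv hvu hu
    exact hd.not_gt hlt
  have hterm : ∀ v ∈ S, lap G f v = if v ∈ bdry G then μ * f v else 0 := fun v hv =>
    hf v (ne_of_mem_of_not_mem hv hxS)
  rw [← sub_pos, ← sum_lap_branchSet hG.isAcyclic hadj f]
  refine Finset.sum_pos' (fun v hv => ?_) ⟨w, hwS, ?_⟩
  · rw [hterm v hv]
    split_ifs
    exacts [(mul_pos hμ (hpos v (ne_of_mem_of_not_mem hv hxS))).le, le_rfl]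
  · rw [hterm w hwS, if_pos hw]
    exact mul_pos hμ (hpos w (ne_of_mem_of_not_mem hwS hxS))

theorem mem_sigmaSet_of_rayleighBound (hG : G.IsTree) (hx : x ∈ bdry G) {m : V → ℝ}
    (hm : 0 ≤ m) (hmx : m x = 0) (hm1 : bdryForm G x m m = 1)
    (hμ : RayleighBound G x (dirichletForm G m m)) : dirichletForm G m m ∈ SigmaSet G x := by
  have hne : m ≠ 0 := by
    rintro rfl
    simp [bdryForm] at hm1
  have hflow := hμ.solvesFlow hmx (by rw [hm1, mul_one])
  have hpos : ∀ v, v ≠ x → 0 < m v := fun v hvx =>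
    (hm v).lt_of_ne fun h => hne (hflow.eq_zero_of_nonneg hG.connected hx hm hvx h.symm)
  obtain ⟨x₁, hx₁, -⟩ := degree_eq_one_iff_existsUnique_adj.mp (mem_bdry.mp hx)
  have hμpos : 0 < dirichletForm G m m := by
    have hedge := sq_sub_le_dirichletForm G m hx₁.symm
    rw [hmx, sub_zero] at hedge
    exact (pow_pos (hpos x₁ hx₁.ne') 2).trans_le hedge
  exact ⟨hμpos.le, m, isFlow_iff.mpr ⟨hne, hflow⟩, hmx,
    fun y z hadj hlt => hflow.lt_of_dist_lt hG hμpos hpos hadj hlt⟩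

end Sigma

theorem flow_negative_gt_sigma_general (G : SimpleGraph V) (hG : G.IsTree)
    (x : V) (hx : x ∈ bdry G)
    (lam : ℝ) (f : V → ℝ)
    (hf : IsFlow G lam x f) (hpos : ∀ z ∈ bdry G, z ≠ x → 0 < f z) (hneg : f x < 0) :
    sigma G x < lam := by
  have hflow := (isFlow_iff.mp hf).2
  obtain ⟨w₀, hw₀, hw₀x⟩ := exists_mem_bdry_ne hG hx
  obtain ⟨m, hm, hmx, hm1, hμ⟩ := exists_nonneg_rayleighBound hG.connected hw₀ hw₀x
  have hσμ : sigma G x ≤ dirichletForm G m m :=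
    csInf_le ⟨0, fun _ h => h.1⟩ (mem_sigmaSet_of_rayleighBound hG hx hm hmx hm1 hμ)
  have hgx : f⁺ x = 0 := posPart_eq_zero.mpr hneg.le
  have hgw₀ : f⁺ w₀ = f w₀ := posPart_eq_self.mpr (hpos w₀ hw₀ hw₀x).le
  have hg := hflow.dirichletForm_posPart_le_mul_bdryForm hneg.le
  have hgμ := hμ f⁺ hgx
  have hbd : 0 < bdryForm G x f⁺ f⁺ := Finset.sum_pos' (fun w _ => mul_self_nonneg _)
    ⟨w₀, Finset.mem_erase.mpr ⟨hw₀x, hw₀⟩, by simpa [hgw₀] using (hpos w₀ hw₀ hw₀x).ne'⟩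
  refine hσμ.trans_lt ((le_of_mul_le_mul_right (hgμ.trans hg) hbd).lt_of_ne ?_)
  intro hμlam
  rw [← hμlam] at hg hflow
  have hgflow := hμ.solvesFlow hgx (le_antisymm hg hgμ)
  have hzero := (hgflow.sub hflow).eq_zero_of_nonneg hG.connected hx
    (fun v => sub_nonneg.mpr (le_posPart (f v))) hw₀x (by simp [hgw₀])
  exact hneg.ne (by simpa [hgx] using congrFun hzero x)

/-- With `σ₁` as in Lemma 3.6 (minimum of `σ(G_j, x₁)` over branches at the
other neighbors of the neighbor `x₁` of the boundary vertex `x`): if `f` is a `lam`-flow to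
`x` with `0 ≤ lam < σ₁`, positive on `δG ∖ {x}`, and `f x < 0`, then `lam > σ(G,x)`. -/
theorem flow_negative_gt_sigma (G : SimpleGraph V) (hG : G.IsTree)
    (hcard : 3 ≤ Fintype.card V) (x : V) (hx : x ∈ bdry G) (x₁ : V) (hx₁ : G.Adj x x₁)
    (σ₁ : ℝ) (hσ₁ : σ₁ = sInf {r : ℝ | ∃ z, G.Adj x₁ z ∧ z ≠ x ∧ r = sigmaB G z x₁})
    (lam : ℝ) (hlam0 : 0 ≤ lam) (hlam1 : lam < σ₁) (f : V → ℝ)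
    (hf : IsFlow G lam x f) (hpos : ∀ z ∈ bdry G, z ≠ x → 0 < f z) (hneg : f x < 0) :
    sigma G x < lam :=
  flow_negative_gt_sigma_general G hG x hx lam f hf hpos hneg
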